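/- Let G be a compact Lie group with Lie algebra 𝔤 and G_X the adjoint stabilizer of X. Suppose (V, d, c, V̄, d̄, c̄, X) satisfies: all entries of V and of d^{-1}c V̄ c^{-1} d lie in G_X, d^{-1} ∈ G_X, c·c̄ ∈ G_X, 𝔪(V) = exp(X/2)·c·d̄·c^{-1}·d, and 𝔪(V̄) = c̄·d·exp(-X/2)·c̄^{-1}·d̄. Then 𝔪(V)·𝔪(d^{-1}c·𝔯(V̄)·c^{-1}d)·[d^{-1}, c·c̄] = exp(X). -/

import Mathlib

/-! Conjugation commutes with `mm`, and reversing-and-swapping the pairs inverts it, so the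
left-hand side collapses in `G` to `exp(X/2) · (c c̄) exp(X/2) (c c̄)⁻¹`. As `c c̄ ∈ G_X`,
conjugation by it fixes `exp(X/2)`, leaving `exp(X/2)² = exp X`. -/

/-- Abstraction of a Lie group `G` with Lie algebra `𝔤`, exponential map `exp`,
and adjoint representation `Ad`, satisfying the standard identities
`exp (Ad g X) = g * exp X * g⁻¹` and one-parameter subgroup additivity. -/
structure LieExpAd (G 𝔤 : Type*) [Group G] [TopologicalSpace G]
    [AddCommGroup 𝔤] [Module ℝ 𝔤] where
  exp : 𝔤 → G
  Ad : G →* (𝔤 ≃ₗ[ℝ] 𝔤)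
  exp_Ad : ∀ (g : G) (X : 𝔤), exp (Ad g X) = g * exp X * g⁻¹
  exp_add_smul : ∀ (r s : ℝ) (X : 𝔤), exp ((r + s) • X) = exp (r • X) * exp (s • X)

open scoped commutatorElement

variable {G 𝔤 : Type*} [Group G] [TopologicalSpace G] [IsTopologicalGroup G]
  [AddCommGroup 𝔤] [Module ℝ 𝔤]

/-- `𝔪(a₁,b₁,…,a_ℓ,b_ℓ) = ∏ᵢ [aᵢ,bᵢ]` (ordered product of commutators). -/
def mm {ℓ : ℕ} (V : Fin ℓ → G × G) : G :=
  (List.ofFn fun i => ⁅(V i).1, (V i).2⁆).prod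

/-- `𝔯(a₁,b₁,…,a_ℓ,b_ℓ) = (b_ℓ,a_ℓ,…,b₁,a₁)`. -/
def rr {ℓ : ℕ} (V : Fin ℓ → G × G) : Fin ℓ → G × G :=
  fun i => ((V i.rev).2, (V i.rev).1)

/-- Entrywise conjugation `g V g⁻¹` of a tuple. -/
def conjT {ℓ : ℕ} (g : G) (V : Fin ℓ → G × G) : Fin ℓ → G × G :=
  fun i => (g * (V i).1 * g⁻¹, g * (V i).2 * g⁻¹)

/-- The adjoint stabilizer `G_X = {g | Ad(g)X = X}`. -/
def stab (L : LieExpAd G 𝔤) (X : 𝔤) : Set G := {g | L.Ad g X = X}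

/-- All entries of the tuple `V` lie in `G_X`. -/
def tupleStab (L : LieExpAd G 𝔤) (X : 𝔤) {ℓ : ℕ} (V : Fin ℓ → G × G) : Prop :=
  ∀ i, (V i).1 ∈ stab L X ∧ (V i).2 ∈ stab L X

/-- Membership in the symmetric representation variety `Z^{ℓ,1}_{YM}(G)`. -/
def memZ1 (L : LieExpAd G 𝔤) {ℓ : ℕ} (V : Fin ℓ → G × G) (c : G)
    (Vb : Fin ℓ → G × G) (cb : G) (X : 𝔤) : Prop :=
  tupleStab L X V ∧ tupleStab L X (conjT c Vb) ∧
  mm V = L.exp ((1/2 : ℝ) • X) * (c * cb) ∧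
  mm Vb = cb * L.exp (-((1/2 : ℝ) • X)) * c

/-- Membership in the symmetric representation variety `Z^{ℓ,2}_{YM}(G)`. -/
def memZ2 (L : LieExpAd G 𝔤) {ℓ : ℕ} (V : Fin ℓ → G × G) (d c : G)
    (Vb : Fin ℓ → G × G) (db cb : G) (X : 𝔤) : Prop :=
  tupleStab L X V ∧ tupleStab L X (conjT (d⁻¹ * c) Vb) ∧
  d⁻¹ ∈ stab L X ∧ c * cb ∈ stab L X ∧
  mm V = L.exp ((1/2 : ℝ) • X) * (c * db * c⁻¹ * d) ∧
  mm Vb = cb * d * L.exp (-((1/2 : ℝ) • X)) * cb⁻¹ * db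

theorem List.ofFn_rev {α : Type*} {n : ℕ} (f : Fin n → α) :
    List.ofFn (fun i => f i.rev) = (List.ofFn f).reverse :=
  List.ext_getElem (by simp) fun i h _ => by
    simp only [List.length_ofFn] at h
    simp only [List.getElem_ofFn, List.getElem_reverse, List.length_ofFn]
    congr 1
    ext
    simp only [Fin.val_rev]
    omega

section Commutators

omit [TopologicalSpace G] [IsTopologicalGroup G]

theorem mm_conjT {ℓ : ℕ} (g : G) (V : Fin ℓ → G × G) :
    mm (conjT g V) = g * mm V * g⁻¹ := by
  change _ = MulAut.conj g (mm V)
  simp only [mm, map_list_prod, List.map_ofFn, Function.comp_def, map_commutatorElement]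
  rfl

theorem mm_rr {ℓ : ℕ} (V : Fin ℓ → G × G) : mm (rr V) = (mm V)⁻¹ := by
  rw [mm, mm, List.prod_inv_reverse, ← List.map_reverse,
    ← List.ofFn_rev fun i => ⁅(V i).1, (V i).2⁆, List.map_ofFn]
  simp only [rr, Function.comp_def, commutatorElement_inv]

end Commutators

namespace LieExpAd

omit [IsTopologicalGroup G]

variable (L : LieExpAd G 𝔤)

theorem exp_zero_smul (X : 𝔤) : L.exp ((0 : ℝ) • X) = 1 := by
  simpa using L.exp_add_smul 0 0 X

theorem exp_neg_smul (r : ℝ) (X : 𝔤) : L.exp (-(r • X)) = (L.exp (r • X))⁻¹ := by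
  rw [← neg_smul]
  refine eq_inv_of_mul_eq_one_right ?_
  rw [← L.exp_add_smul, add_neg_cancel, L.exp_zero_smul]

theorem exp_half_mul_exp_half (X : 𝔤) :
    L.exp ((1 / 2 : ℝ) • X) * L.exp ((1 / 2 : ℝ) • X) = L.exp X := by
  rw [← L.exp_add_smul]
  norm_num

theorem conj_exp_smul_of_mem_stab {X : 𝔤} {g : G} (hg : g ∈ stab L X) (r : ℝ) :
    g * L.exp (r • X) * g⁻¹ = L.exp (r • X) := by
  rw [← L.exp_Ad, map_smul, hg]

end LieExpAd

theorem phi2_into_ym_general (L : LieExpAd G 𝔤) {ℓ : ℕ}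
    (V Vb : Fin ℓ → G × G) (d c db cb : G) (X : 𝔤)
    (h : memZ2 L V d c Vb db cb X) :
    mm V * mm (conjT (d⁻¹ * c) (rr Vb)) * ⁅d⁻¹, c * cb⁆ = L.exp X := by
  obtain ⟨-, -, -, hccb, hmV, hmVb⟩ := h
  set e := L.exp ((1 / 2 : ℝ) • X)
  rw [mm_conjT, mm_rr, hmV, hmVb, L.exp_neg_smul]
  calc e * (c * db * c⁻¹ * d) * (d⁻¹ * c * (cb * d * e⁻¹ * cb⁻¹ * db)⁻¹ * (d⁻¹ * c)⁻¹) *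
        ⁅d⁻¹, c * cb⁆
      = e * ((c * cb) * e * (c * cb)⁻¹) := by
        simp only [commutatorElement_def]
        group
    _ = L.exp X := by rw [L.conj_exp_smul_of_mem_stab hccb, L.exp_half_mul_exp_half]

/-- on `Z^{ℓ,2}_{YM}(G)`,
`𝔪(V)·𝔪(d⁻¹c 𝔯(V̄) c⁻¹d)·[d⁻¹, c·c̄] = exp X`. -/
theorem phi2_into_ym [CompactSpace G] (L : LieExpAd G 𝔤) {ℓ : ℕ}
    (V Vb : Fin ℓ → G × G) (d c db cb : G) (X : 𝔤)
    (h : memZ2 L V d c Vb db cb X) :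
    mm V * mm (conjT (d⁻¹ * c) (rr Vb)) * ⁅d⁻¹, c * cb⁆ = L.exp X :=
  phi2_into_ym_general L V Vb d c db cb X h
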